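/- arXiv:0909.3304 — 4 statements merged into one kernel-verified Lean document; each statement's English description precedes it below -/
import Mathlib

section
/- Let Y be a Hermitian-matrix-valued random variable with ‖Y‖ ≤ 1 almost surely and E[Y] = 0. Then ‖E[exp(Y)]‖ ≤ exp(‖E[Y²]‖), where ‖·‖ denotes the operator norm. -/
open Matrix MeasureTheory
open scoped ComplexOrder

noncomputable def opNorm {d : ℕ} (A : Matrix (Fin d) (Fin d) ℂ) : ℝ :=
  ‖LinearMap.toContinuousLinearMap (Matrix.toEuclideanLin A)‖

/-- Entrywise expectation of a matrix-valued random variable. -/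
noncomputable def matExp {Ω : Type*} [MeasurableSpace Ω] (μ : Measure Ω) {d : ℕ}
    (Y : Ω → Matrix (Fin d) (Fin d) ℂ) : Matrix (Fin d) (Fin d) ℂ :=
  fun i j => ∫ ω, Y ω i j ∂μ

/-!
For a self-adjoint `a` with `‖a‖ ≤ 1` the functional calculus turns the scalar inequality
`eˣ ≤ 1 + x + x²` on `[-1, 1]` into `0 ≤ exp a ≤ 1 + a + a²` in the Loewner order. Integrating,
and using `E[Y] = 0`, gives `0 ≤ E[exp Y] ≤ 1 + E[Y²]`; the operator norm is monotone on positive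
elements, so `‖E[exp Y]‖ ≤ 1 + ‖E[Y²]‖ ≤ exp ‖E[Y²]‖`.
-/

theorem Real.exp_le_one_add_add_sq {x : ℝ} (hx : |x| ≤ 1) : Real.exp x ≤ 1 + x + x ^ 2 := by
  linarith [(abs_le.mp (Real.abs_exp_sub_one_sub_id_le hx)).2]

section CStarAlgebra

variable {A : Type*} [CStarAlgebra A] [PartialOrder A] [StarOrderedRing A]

theorem IsSelfAdjoint.exp_le_one_add_add_mul_self {a : A} (ha : IsSelfAdjoint a) (h : ‖a‖ ≤ 1) :
    NormedSpace.exp a ≤ 1 + a + a * a := by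
  nontriviality A
  calc NormedSpace.exp a = cfc Real.exp a := (CFC.real_exp_eq_normedSpace_exp ha).symm
    _ ≤ cfc (fun x => 1 + x + x ^ 2) a :=
        cfc_mono fun x hx => Real.exp_le_one_add_add_sq ((spectrum.norm_le_norm_of_mem hx).trans h)
    _ = 1 + a + a * a := by
        rw [cfc_add .., cfc_add .., cfc_const_one .., cfc_id' .., cfc_pow_id .., sq]

variable {Ω : Type*} [MeasurableSpace Ω] {μ : Measure Ω} [IsProbabilityMeasure μ]

theorem norm_integral_exp_le_exp_norm_integral_mul_self {Y : Ω → A}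
    (hsa : ∀ᵐ ω ∂μ, IsSelfAdjoint (Y ω)) (hbound : ∀ᵐ ω ∂μ, ‖Y ω‖ ≤ 1)
    (hY : Integrable Y μ) (hY2 : Integrable (fun ω => Y ω * Y ω) μ)
    (hexp : Integrable (fun ω => NormedSpace.exp (Y ω)) μ) (hmean : ∫ ω, Y ω ∂μ = 0) :
    ‖∫ ω, NormedSpace.exp (Y ω) ∂μ‖ ≤ Real.exp ‖∫ ω, Y ω * Y ω ∂μ‖ := by
  nontriviality A
  have hnonneg : 0 ≤ ∫ ω, NormedSpace.exp (Y ω) ∂μ :=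
    integral_nonneg_of_ae (hsa.mono fun ω h => h.exp_nonneg)
  have hle : ∫ ω, NormedSpace.exp (Y ω) ∂μ ≤ 1 + ∫ ω, Y ω * Y ω ∂μ :=
    calc ∫ ω, NormedSpace.exp (Y ω) ∂μ ≤ ∫ ω, 1 + Y ω + Y ω * Y ω ∂μ :=
          integral_mono_ae hexp (((integrable_const 1).add hY).add hY2) <| by
            filter_upwards [hsa, hbound] with ω h₁ h₂ using h₁.exp_le_one_add_add_mul_self h₂
      _ = 1 + ∫ ω, Y ω * Y ω ∂μ := by
          rw [integral_add (f := fun ω => 1 + Y ω) ((integrable_const 1).add hY) hY2,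
            integral_add (integrable_const 1) hY,
            integral_const, hmean, probReal_univ, one_smul, add_zero]
  calc ‖∫ ω, NormedSpace.exp (Y ω) ∂μ‖ ≤ ‖1 + ∫ ω, Y ω * Y ω ∂μ‖ :=
        CStarAlgebra.norm_le_norm_of_nonneg_of_le hnonneg hle
    _ ≤ 1 + ‖∫ ω, Y ω * Y ω ∂μ‖ := by simpa using norm_add_le (1 : A) (∫ ω, Y ω * Y ω ∂μ)
    _ ≤ Real.exp ‖∫ ω, Y ω * Y ω ∂μ‖ := by linarith [Real.add_one_le_exp ‖∫ ω, Y ω * Y ω ∂μ‖]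

end CStarAlgebra

section Matrix

open scoped Matrix.Norms.L2Operator

variable {Ω : Type*} [MeasurableSpace Ω] {μ : Measure Ω}

theorem Matrix.integrable_of_integrable_entry {m n 𝕜 : Type*} [Fintype m] [Fintype n]
    [DecidableEq m] [DecidableEq n] [RCLike 𝕜] {Y : Ω → Matrix m n 𝕜}
    (hY : ∀ i j, Integrable (fun ω => Y ω i j) μ) : Integrable Y μ := by
  have hsum : Y = fun ω => ∑ i, ∑ j, Y ω i j • single i j (1 : 𝕜) := by
    ext1 ω
    simp_rw [smul_single, smul_eq_mul, mul_one]
    exact matrix_eq_sum_single (Y ω)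
  rw [hsum]
  exact integrable_finsetSum _ fun i _ => integrable_finsetSum _ fun j _ => (hY i j).smul_const _

theorem matExp_eq_integral {d : ℕ} {Y : Ω → Matrix (Fin d) (Fin d) ℂ}
    (hY : ∀ i j, Integrable (fun ω => Y ω i j) μ) : matExp μ Y = ∫ ω, Y ω ∂μ := by
  ext i j
  exact (entryLinearMap ℂ ℂ i j).toContinuousLinearMap.integral_comp_comm
    (integrable_of_integrable_entry hY)

end Matrix

theorem opNorm_matExp_exp_le {Ω : Type*} [MeasurableSpace Ω] (μ : Measure Ω)
    [IsProbabilityMeasure μ] {d : ℕ}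
    (Y : Ω → Matrix (Fin d) (Fin d) ℂ)
    (hherm : ∀ᵐ ω ∂μ, (Y ω).IsHermitian)
    (hbound : ∀ᵐ ω ∂μ, opNorm (Y ω) ≤ 1)
    (hint : ∀ i j, Integrable (fun ω => Y ω i j) μ)
    (hint2 : ∀ i j, Integrable (fun ω => (Y ω * Y ω) i j) μ)
    (hintexp : ∀ i j, Integrable (fun ω => NormedSpace.exp (Y ω) i j) μ)
    (hmean : matExp μ Y = 0) :
    opNorm (matExp μ (fun ω => NormedSpace.exp (Y ω))) ≤
      Real.exp (opNorm (matExp μ (fun ω => Y ω * Y ω))) := by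
  -- Under the L2-operator-norm instance, `opNorm A` is by definition `‖A‖`.
  open scoped Matrix.Norms.L2Operator MatrixOrder in
  (rw [matExp_eq_integral hintexp, matExp_eq_integral hint2]
   exact norm_integral_exp_le_exp_norm_integral_mul_self
    (hherm.mono fun _ h => h.isSelfAdjoint) hbound (integrable_of_integrable_entry hint)
    (integrable_of_integrable_entry hint2) (integrable_of_integrable_entry hintexp)
    (matExp_eq_integral hint ▸ hmean))
end

section
/- Let E be a rank-r orthogonal projection on ℂ^d and let T be the subspace of Hermitian d×d matrices spanned by those matrices whose row space or column space is contained in the range of E. Then for any d×d Hermitian matrix w with operator norm ‖w‖ = 1 and Tr(w²) = d, the Hilbert–Schmidt norm of the orthogonal projection of w onto T satisfies ‖P_T(w)‖₂² ≤ 2r. -/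
open Matrix
open scoped ComplexOrder

noncomputable def frobNorm {d : ℕ} (A : Matrix (Fin d) (Fin d) ℂ) : ℝ :=
  Real.sqrt (∑ i, ∑ j, ‖A i j‖ ^ 2)

/-- Projection (w.r.t. the trace inner product) onto the span `T` of Hermitian matrices
whose row or column space is contained in the range of the projection `E`:
`P_T(A) = A - (1-E) A (1-E)`. -/
noncomputable def PT {d : ℕ} (E A : Matrix (Fin d) (Fin d) ℂ) : Matrix (Fin d) (Fin d) ℂ :=
  A - (1 - E) * A * (1 - E)

lemma aux_trace_sq {d : ℕ} (M : Matrix (Fin d) (Fin d) ℂ) :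
    (Mᴴ * M).trace = ((∑ i, ∑ j, ‖M i j‖ ^ 2 : ℝ) : ℂ) := by
  simp only [Matrix.trace, Matrix.diag, Matrix.mul_apply, Matrix.conjTranspose_apply]
  push_cast
  rw [Finset.sum_comm]
  refine Finset.sum_congr rfl fun j _ => Finset.sum_congr rfl fun i _ => ?_
  rw [RCLike.star_def, RCLike.conj_mul]
  norm_cast

lemma aux_psd_trace_re {d : ℕ} {N : Matrix (Fin d) (Fin d) ℂ} (h : N.PosSemidef) :
    0 ≤ N.trace.re := by
  have h1 : ∀ i, 0 ≤ N i i := by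
    intro i
    have := h.dotProduct_mulVec_nonneg (Pi.single i 1)
    simpa [dotProduct, Matrix.mulVec, Pi.single_apply, Finset.mul_sum, apply_ite] using this
  rw [Matrix.trace, Complex.re_sum]
  exact Finset.sum_nonneg fun i _ => (Complex.le_def.mp (h1 i)).1

lemma aux_mulVec_bound {d : ℕ} (w : Matrix (Fin d) (Fin d) ℂ) (hwle : opNorm w ≤ 1)
    (x : Fin d → ℂ) : ∑ i, ‖(w *ᵥ x) i‖ ^ 2 ≤ ∑ i, ‖x i‖ ^ 2 := by
  set x' : EuclideanSpace ℂ (Fin d) := (WithLp.equiv 2 _).symm x with hx'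
  have h1 : ‖(LinearMap.toContinuousLinearMap (Matrix.toEuclideanLin w)) x'‖ ≤ ‖x'‖ := by
    calc ‖(LinearMap.toContinuousLinearMap (Matrix.toEuclideanLin w)) x'‖
        ≤ opNorm w * ‖x'‖ := ContinuousLinearMap.le_opNorm _ _
      _ ≤ 1 * ‖x'‖ := by gcongr
      _ = ‖x'‖ := one_mul _
  have h2 : (LinearMap.toContinuousLinearMap (Matrix.toEuclideanLin w)) x'
      = (WithLp.equiv 2 _).symm (w *ᵥ x) := by
    simp [hx', Matrix.toEuclideanLin_apply]
  rw [h2] at h1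
  have e1 : ‖(WithLp.equiv 2 (Fin d → ℂ)).symm (w *ᵥ x)‖
      = Real.sqrt (∑ i, ‖(w *ᵥ x) i‖ ^ 2) := by
    rw [EuclideanSpace.norm_eq]; rfl
  have e2 : ‖x'‖ = Real.sqrt (∑ i, ‖x i‖ ^ 2) := by
    rw [hx', EuclideanSpace.norm_eq]; rfl
  rw [e1, e2] at h1
  have hnn : (0:ℝ) ≤ ∑ i, ‖(w *ᵥ x) i‖ ^ 2 := Finset.sum_nonneg fun i _ => by positivity
  nlinarith [Real.sq_sqrt hnn, Real.sqrt_nonneg (∑ i, ‖x i‖ ^ 2),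
    Real.sq_sqrt (Finset.sum_nonneg (fun (i : Fin d) _ => by positivity : ∀ i ∈ Finset.univ, (0:ℝ) ≤ ‖x i‖ ^ 2)),
    Real.sqrt_nonneg (∑ i, ‖(w *ᵥ x) i‖ ^ 2)]

lemma aux_dot_self {d : ℕ} (v : Fin d → ℂ) :
    star v ⬝ᵥ v = ((∑ i, ‖v i‖ ^ 2 : ℝ) : ℂ) := by
  push_cast
  simp only [dotProduct, Pi.star_apply]
  refine Finset.sum_congr rfl fun i _ => ?_
  rw [RCLike.star_def, RCLike.conj_mul]
  norm_cast

lemma aux_psd_one_sub_sq {d : ℕ} (w : Matrix (Fin d) (Fin d) ℂ) (hw : w.IsHermitian)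
    (hwle : opNorm w ≤ 1) : (1 - w * w).PosSemidef := by
  refine Matrix.PosSemidef.of_dotProduct_mulVec_nonneg ?_ ?_
  · unfold Matrix.IsHermitian
    simp [Matrix.conjTranspose_sub, Matrix.conjTranspose_mul, hw.eq]
  · intro x
    rw [Matrix.sub_mulVec, dotProduct_sub, Matrix.one_mulVec, ← Matrix.mulVec_mulVec]
    have h1 : star x ⬝ᵥ (w *ᵥ (w *ᵥ x)) = star (w *ᵥ x) ⬝ᵥ (w *ᵥ x) := by
      rw [dotProduct_mulVec]
      congr 1
      rw [Matrix.star_mulVec, hw.eq]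
    rw [h1, sub_nonneg, aux_dot_self, aux_dot_self]
    exact_mod_cast aux_mulVec_bound w hwle x

lemma aux_trace_proj {d r : ℕ} (E : Matrix (Fin d) (Fin d) ℂ)
    (hE : E.IsHermitian) (hE2 : E * E = E) (hrank : E.rank = r) :
    E.trace = (r : ℂ) := by
  classical
  have hUs : (hE.eigenvectorUnitary : Matrix (Fin d) (Fin d) ℂ) * star (hE.eigenvectorUnitary : Matrix (Fin d) (Fin d) ℂ) = 1 :=
    (Matrix.mem_unitaryGroup_iff).mp hE.eigenvectorUnitary.2
  have hsU : star (hE.eigenvectorUnitary : Matrix (Fin d) (Fin d) ℂ) * (hE.eigenvectorUnitary : Matrix (Fin d) (Fin d) ℂ) = 1 :=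
    (Matrix.mem_unitaryGroup_iff').mp hE.eigenvectorUnitary.2
  have hdiag : star (hE.eigenvectorUnitary : Matrix (Fin d) (Fin d) ℂ) * E * (hE.eigenvectorUnitary : Matrix (Fin d) (Fin d) ℂ)
      = diagonal (RCLike.ofReal ∘ hE.eigenvalues) := by
    have := hE.conjStarAlgAut_star_eigenvectorUnitary
    rw [Unitary.conjStarAlgAut_apply] at this
    simpa using this
  have hDD : (diagonal (RCLike.ofReal ∘ hE.eigenvalues) : Matrix (Fin d) (Fin d) ℂ)
      * diagonal (RCLike.ofReal ∘ hE.eigenvalues) = diagonal (RCLike.ofReal ∘ hE.eigenvalues) := by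
    rw [← hdiag]
    calc (star (hE.eigenvectorUnitary : Matrix (Fin d) (Fin d) ℂ) * E * hE.eigenvectorUnitary)
        * (star (hE.eigenvectorUnitary : Matrix (Fin d) (Fin d) ℂ) * E * hE.eigenvectorUnitary)
        = star (hE.eigenvectorUnitary : Matrix (Fin d) (Fin d) ℂ) * E
          * ((hE.eigenvectorUnitary : Matrix (Fin d) (Fin d) ℂ) * star (hE.eigenvectorUnitary : Matrix (Fin d) (Fin d) ℂ))
          * E * hE.eigenvectorUnitary := by noncomm_ring
      _ = star (hE.eigenvectorUnitary : Matrix (Fin d) (Fin d) ℂ) * (E * E) * hE.eigenvectorUnitary := by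
          rw [hUs]; noncomm_ring
      _ = star (hE.eigenvectorUnitary : Matrix (Fin d) (Fin d) ℂ) * E * hE.eigenvectorUnitary := by
          rw [hE2]
  have hev : ∀ i, hE.eigenvalues i = 0 ∨ hE.eigenvalues i = 1 := by
    intro i
    have h := congrFun (congrFun hDD i) i
    simp only [Matrix.diagonal_mul_diagonal, Matrix.diagonal_apply_eq, Function.comp] at h
    have h' : hE.eigenvalues i * hE.eigenvalues i = hE.eigenvalues i := by exact_mod_cast h
    rcases mul_eq_zero.mp (show hE.eigenvalues i * (hE.eigenvalues i - 1) = 0 by ring_nf; nlinarith [h']) with h0 | h0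
    · exact Or.inl h0
    · exact Or.inr (by linarith)
  have htr : E.trace = ∑ i, (hE.eigenvalues i : ℂ) := by
    conv_lhs => rw [hE.spectral_theorem, Unitary.conjStarAlgAut_apply]
    rw [Matrix.trace_mul_cycle, hsU, Matrix.one_mul, Matrix.trace_diagonal]
    simp [Function.comp]
  have hsum : ∑ i, hE.eigenvalues i = (r : ℝ) := by
    rw [← hrank, hE.rank_eq_card_non_zero_eigs, Fintype.card_subtype]
    rw [← Finset.sum_filter_ne_zero Finset.univ]
    calc (Finset.filter (fun i => hE.eigenvalues i ≠ 0) Finset.univ).sum hE.eigenvalues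
        = ∑ _i ∈ Finset.filter (fun i => hE.eigenvalues i ≠ 0) Finset.univ, (1 : ℝ) := by
          refine Finset.sum_congr rfl fun i hi => ?_
          rcases hev i with h0 | h1
          · exact absurd h0 (Finset.mem_filter.mp hi).2
          · exact h1
      _ = _ := by simp
  rw [htr, ← Complex.ofReal_sum, hsum, Complex.ofReal_natCast]

theorem frobNorm_sq_PT_pauli_le {d r : ℕ} (E : Matrix (Fin d) (Fin d) ℂ)
    (hE : E.IsHermitian) (hE2 : E * E = E) (hrank : E.rank = r)
    (w : Matrix (Fin d) (Fin d) ℂ) (hw : w.IsHermitian)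
    (hwle : opNorm w ≤ 1) (hwnorm : opNorm w ^ 2 = 1)
    (hwtr : (w * w).trace = (d : ℂ)) :
    frobNorm (PT E w) ^ 2 ≤ 2 * r := by
  classical
  have hE2' : ∀ X : Matrix (Fin d) (Fin d) ℂ, E * (E * X) = E * X := fun X => by
    rw [← Matrix.mul_assoc, hE2]
  -- Hermitian-ness of the projection
  have hBH : (PT E w)ᴴ = PT E w := by
    unfold PT
    simp [Matrix.conjTranspose_sub, Matrix.conjTranspose_mul, Matrix.conjTranspose_one,
      hE.eq, hw.eq, Matrix.mul_assoc]
  -- cyclic trace facts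
  have hDw : (w * (E * w)).trace = (E * (w * w)).trace := by
    rw [Matrix.trace_mul_comm, Matrix.mul_assoc]
  have hBw : (E * (w * (w * E))).trace = (E * (w * w)).trace := by
    rw [show E * (w * (w * E)) = (E * (w * w)) * E by simp [Matrix.mul_assoc],
      Matrix.trace_mul_comm, hE2']
  have hEw : (w * (E * (w * E))).trace = (E * (w * (E * w))).trace := by
    rw [Matrix.trace_mul_comm]
    congr 1
    simp [Matrix.mul_assoc]
  have hC : (E * (w * (E * (w * E)))).trace = (E * (w * (E * w))).trace := by
    rw [show E * (w * (E * (w * E))) = (E * (w * (E * w))) * E by simp [Matrix.mul_assoc],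
      Matrix.trace_mul_comm, hE2']
  -- key trace identity
  have key : ((PT E w) * (PT E w)).trace
      = 2 * (E * (w * w)).trace - (E * (w * (E * w))).trace := by
    have hB' : PT E w = E * w + w * E - E * w * E := by
      unfold PT; noncomm_ring
    rw [hB']
    simp only [Matrix.sub_mul, Matrix.mul_sub, Matrix.add_mul, Matrix.mul_add,
      Matrix.trace_sub, Matrix.trace_add, Matrix.mul_assoc, hE2']
    rw [hDw, hBw, hEw, hC]
    ring
  -- t2 is nonnegative
  have hMH : (E * w * E)ᴴ = E * w * E := by
    simp [Matrix.conjTranspose_mul, hE.eq, hw.eq, Matrix.mul_assoc]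
  have ht2 : (E * (w * (E * w))).trace = ((E * w * E)ᴴ * (E * w * E)).trace := by
    rw [hMH, show (E * w * E) * (E * w * E) = E * (w * (E * (w * E))) by
      simp [Matrix.mul_assoc, hE2'], hC]
  have ht2re : 0 ≤ ((E * (w * (E * w))).trace).re := by
    rw [ht2, aux_trace_sq, Complex.ofReal_re]
    exact Finset.sum_nonneg fun i _ => Finset.sum_nonneg fun j _ => by positivity
  -- t1 is at most r
  have hpsd := Matrix.PosSemidef.mul_mul_conjTranspose_same (aux_psd_one_sub_sq w hw hwle) E
  rw [hE.eq] at hpsd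
  have hid : E * (1 - w * w) * E = E - (E * (w * w)) * E := by
    rw [Matrix.mul_sub, Matrix.mul_one, Matrix.sub_mul, hE2]
  rw [hid] at hpsd
  have ht1re : ((E * (w * w)).trace).re ≤ (r : ℝ) := by
    have h0 := aux_psd_trace_re hpsd
    rw [Matrix.trace_sub, Complex.sub_re] at h0
    have hEtr : E.trace.re = (r : ℝ) := by
      rw [aux_trace_proj E hE hE2 hrank]; simp
    have hcyc : ((E * (w * w)) * E).trace = (E * (w * w)).trace := by
      rw [Matrix.trace_mul_comm, hE2']
    rw [hcyc, hEtr] at h0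
    linarith
  -- put everything together
  have hfr : frobNorm (PT E w) ^ 2 = (((PT E w)ᴴ * PT E w).trace).re := by
    rw [frobNorm, Real.sq_sqrt (Finset.sum_nonneg fun i _ => Finset.sum_nonneg fun j _ => by positivity),
      aux_trace_sq, Complex.ofReal_re]
  rw [hfr, hBH, key]
  have hre : (2 * (E * (w * w)).trace - (E * (w * (E * w))).trace).re
      = 2 * ((E * (w * w)).trace).re - ((E * (w * (E * w))).trace).re := by
    simp [Complex.sub_re, Complex.mul_re]
  rw [hre]
  linarith
end

section
/- Let ρ be a positive semidefinite matrix of rank r with range projection E, let T be the span of Hermitian matrices whose row or column space lies in range(E), and let Δ be Hermitian with decomposition Δ = Δ_T + Δ_T^⊥ (the parts in T and its orthogonal complement). Suppose ‖Δ_T‖₂ ≤ d²‖Δ_T^⊥‖₂ and there exists a Hermitian matrix Y with Tr(YΔ) = 0, ‖P_T(Y) − E‖₂ ≤ 1/(2d²), and ‖P_T^⊥(Y)‖ < 1/2. Then ‖ρ + Δ‖_tr > ‖ρ‖_tr whenever Δ ≠ 0. -/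
open Matrix
open scoped ComplexOrder

/-- The positive semidefinite square root of a positive semidefinite matrix, with the definition
it had in Mathlib before its removal. -/
noncomputable def Matrix.PosSemidef.sqrt {n 𝕜 : Type*} [Fintype n] [DecidableEq n] [RCLike 𝕜]
    {A : Matrix n n 𝕜} (hA : A.PosSemidef) : Matrix n n 𝕜 :=
  hA.1.eigenvectorUnitary.1 * diagonal ((↑) ∘ Real.sqrt ∘ hA.1.eigenvalues) *
    (star hA.1.eigenvectorUnitary : Matrix n n 𝕜)

noncomputable def traceNorm {d : ℕ} (A : Matrix (Fin d) (Fin d) ℂ) : ℝ :=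
  ((Matrix.posSemidef_conjTranspose_mul_self A).sqrt.trace).re

noncomputable def PTperp {d : ℕ} (E A : Matrix (Fin d) (Fin d) ℂ) : Matrix (Fin d) (Fin d) ℂ :=
  (1 - E) * A * (1 - E)

/-!
Write `Δ⊥ = P_T^⊥ Δ`. Its sign `S = sign Δ⊥` is supported on the range of `1 - E`, so `E + S` is a
contraction and, by Hölder, `‖ρ + Δ‖₁ ≥ Re Tr ((E + S) (ρ + Δ)) = Tr ρ + Re Tr (E Δ_T) + ‖Δ⊥‖₁`.
Since `Tr (Y Δ) = 0` and `P_T`, `P_T^⊥` are orthogonal for the trace pairing,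
`Tr (E Δ_T) = -Tr ((P_T Y - E) Δ_T) - Tr (P_T^⊥ Y Δ⊥)`. By Cauchy–Schwarz and the bound on `Δ_T`
the first term is at most `‖Δ⊥‖₂ / 2 ≤ ‖Δ⊥‖₁ / 2`; by Hölder the second is strictly less than
`‖Δ⊥‖₁ / 2`, as `Δ ≠ 0` forces `Δ⊥ ≠ 0`.
-/

open MatrixOrder
open scoped Matrix.Norms.L2Operator

section SpectralCalculus

variable {n 𝕜 : Type*} [Fintype n] [DecidableEq n] [RCLike 𝕜] {A B : Matrix n n 𝕜}

theorem Matrix.PosSemidef.sqrt_eq_cfcSqrt (hA : A.PosSemidef) : hA.sqrt = CFC.sqrt A := by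
  rw [CFC.sqrt_eq_cfc, cfc_nnreal_eq_real _ A, hA.1.cfc_eq]
  simp only [IsHermitian.cfc, Matrix.PosSemidef.sqrt, Unitary.conjStarAlgAut_apply]
  congr 3
  funext i
  simp [Real.coe_toNNReal', max_eq_left (hA.eigenvalues_nonneg i)]

theorem Matrix.IsHermitian.trace_cfc (hA : A.IsHermitian) (f : ℝ → ℝ) :
    (cfc f A).trace = ∑ i, (f (hA.eigenvalues i) : 𝕜) := by
  rw [hA.cfc_eq, IsHermitian.cfc, Unitary.conjStarAlgAut_apply, Matrix.trace_mul_cycle,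
    Unitary.coe_star_mul_self, Matrix.one_mul, Matrix.trace_diagonal]
  rfl

theorem Matrix.IsHermitian.l2_opNorm_cfc_le (hA : A.IsHermitian) {f : ℝ → ℝ} {c : ℝ}
    (hc : 0 ≤ c) (hf : ∀ i, |f (hA.eigenvalues i)| ≤ c) : ‖cfc f A‖ ≤ c := by
  rw [hA.cfc_eq, IsHermitian.cfc, Unitary.conjStarAlgAut_apply, ← Unitary.coe_star,
    CStarRing.norm_mul_coe_unitary, CStarRing.norm_coe_unitary_mul, l2_opNorm_diagonal]
  refine pi_norm_le_iff_of_nonneg hc |>.mpr fun i => ?_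
  simpa using hf i

/-- `f x = x * (f x / x)` holds at `x = 0` as well, because `0 / 0 = 0`. -/
theorem Matrix.IsHermitian.cfc_eq_mul_cfc_div (hA : A.IsHermitian) {f : ℝ → ℝ} (hf : f 0 = 0) :
    cfc f A = A * cfc (fun x => f x / x) A := by
  conv_rhs => enter [1]; rw [← cfc_id' ℝ A]
  rw [← cfc_mul _ _ A (A.finite_real_spectrum.continuousOn _)
    (A.finite_real_spectrum.continuousOn _)]
  refine cfc_congr fun x _ => ?_
  rcases eq_or_ne x 0 with rfl | hx
  · simp [hf]
  · field_simp

theorem Matrix.IsHermitian.mul_cfc_eq_zero (hA : A.IsHermitian) (hBA : B * A = 0) {f : ℝ → ℝ}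
    (hf : f 0 = 0) : B * cfc f A = 0 := by
  rw [hA.cfc_eq_mul_cfc_div hf, ← Matrix.mul_assoc, hBA, Matrix.zero_mul]

theorem Matrix.IsHermitian.cfc_mul_eq_zero (hA : A.IsHermitian) (hAB : A * B = 0) {f : ℝ → ℝ}
    (hf : f 0 = 0) : cfc f A * B = 0 := by
  have hcomm := cfc_commute_cfc id (fun x => f x / x) A
  rw [cfc_id ℝ A hA.isSelfAdjoint] at hcomm
  rw [hA.cfc_eq_mul_cfc_div hf, hcomm.eq, Matrix.mul_assoc, hAB, Matrix.mul_zero]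

noncomputable def Matrix.cfcSign (A : Matrix n n 𝕜) : Matrix n n 𝕜 :=
  cfc (fun x : ℝ => (SignType.sign x : ℝ)) A

theorem Matrix.IsHermitian.l2_opNorm_cfcSign_le (hA : A.IsHermitian) : ‖A.cfcSign‖ ≤ 1 :=
  hA.l2_opNorm_cfc_le zero_le_one fun i => by
    rcases lt_trichotomy (hA.eigenvalues i) 0 with h | h | h <;> simp [h]

theorem Matrix.IsHermitian.mul_cfcSign_eq_zero (hA : A.IsHermitian) (hBA : B * A = 0) :
    B * A.cfcSign = 0 :=
  hA.mul_cfc_eq_zero hBA (by simp)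

theorem Matrix.IsHermitian.cfcSign_mul_eq_zero (hA : A.IsHermitian) (hAB : A * B = 0) :
    A.cfcSign * B = 0 :=
  hA.cfc_mul_eq_zero hAB (by simp)

theorem Matrix.IsHermitian.cfcSign_mul_self (hA : A.IsHermitian) :
    A.cfcSign * A = CFC.abs A := by
  conv_lhs => enter [2]; rw [← cfc_id' ℝ A]
  rw [cfcSign, ← cfc_mul _ _ A (A.finite_real_spectrum.continuousOn _), CFC.abs_eq_cfc_norm A]
  exact cfc_congr fun x _ => sign_mul_self x

end SpectralCalculus

section OperatorNorm

variable {n 𝕜 : Type*} [Fintype n] [DecidableEq n] [RCLike 𝕜]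

theorem opNorm_eq_l2_opNorm {d : ℕ} (A : Matrix (Fin d) (Fin d) ℂ) : opNorm A = ‖A‖ := rfl

theorem Matrix.norm_entry_le_l2_opNorm (M : Matrix n n 𝕜) (i j : n) : ‖M i j‖ ≤ ‖M‖ :=
  calc ‖M i j‖ = ‖(EuclideanSpace.equiv n 𝕜).symm (M *ᵥ (EuclideanSpace.single j 1 :
          EuclideanSpace 𝕜 n)) i‖ := by simp [mulVec_single]
    _ ≤ ‖(EuclideanSpace.equiv n 𝕜).symm (M *ᵥ (EuclideanSpace.single j 1 :
          EuclideanSpace 𝕜 n))‖ := PiLp.norm_apply_le _ i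
    _ ≤ ‖M‖ := by simpa using M.l2_opNorm_mulVec (EuclideanSpace.single j 1)

/-- Pythagoras, twice: `‖(e + s) x‖² = ‖e x‖² + ‖s (x - e x)‖² ≤ ‖e x‖² + ‖x - e x‖² = ‖x‖²`. -/
theorem ContinuousLinearMap.norm_add_le_one {H : Type*} [NormedAddCommGroup H]
    [InnerProductSpace 𝕜 H] [CompleteSpace H] {e s : H →L[𝕜] H} (he : IsStarProjection e)
    (hes : e * s = 0) (hse : s * e = 0) (hs : ‖s‖ ≤ 1) : ‖e + s‖ ≤ 1 := by
  have he_symm (x y : H) : inner 𝕜 (e x) y = inner 𝕜 x (e y) :=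
    IsSelfAdjoint.isSymmetric he.isSelfAdjoint x y
  have hes' (y : H) : e (s y) = 0 := DFunLike.congr_fun hes y
  have hse' (y : H) : s (e y) = 0 := DFunLike.congr_fun hse y
  have hee' (y : H) : e (e y) = e y := DFunLike.congr_fun he.isIdempotentElem.eq y
  refine opNorm_le_bound _ zero_le_one fun x => ?_
  have h_sum : ‖(e + s) x‖ * ‖(e + s) x‖ = ‖e x‖ * ‖e x‖ + ‖s x‖ * ‖s x‖ := by
    rw [_root_.add_apply]
    exact norm_add_sq_eq_norm_sq_add_norm_sq_of_inner_eq_zero _ _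
      (by rw [he_symm, hes', inner_zero_right])
  have h_split : ‖x‖ * ‖x‖ = ‖e x‖ * ‖e x‖ + ‖x - e x‖ * ‖x - e x‖ := by
    conv_lhs => rw [← add_sub_cancel (e x) x]
    exact norm_add_sq_eq_norm_sq_add_norm_sq_of_inner_eq_zero _ _
      (by rw [he_symm, map_sub, hee', sub_self, inner_zero_right])
  have h_s : ‖s x‖ ≤ ‖x - e x‖ :=
    calc ‖s x‖ = ‖s (x - e x)‖ := by rw [map_sub, hse', sub_zero]
      _ ≤ ‖s‖ * ‖x - e x‖ := le_opNorm _ _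
      _ ≤ ‖x - e x‖ := mul_le_of_le_one_left (norm_nonneg _) hs
  rw [one_mul, mul_self_le_mul_self_iff (norm_nonneg _) (norm_nonneg _), h_sum, h_split]
  gcongr

theorem Matrix.l2_opNorm_add_le_one {E S : Matrix n n 𝕜} (hE : IsStarProjection E)
    (hES : E * S = 0) (hSE : S * E = 0) (hS : ‖S‖ ≤ 1) : ‖E + S‖ ≤ 1 := by
  rw [← l2_opNorm_toEuclideanCLM, map_add]
  exact ContinuousLinearMap.norm_add_le_one (hE.map toEuclideanCLM)
    (by rw [← map_mul, hES, map_zero]) (by rw [← map_mul, hSE, map_zero]) hS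

end OperatorNorm

section FrobeniusAndTraceNorm

variable {d : ℕ} {A : Matrix (Fin d) (Fin d) ℂ}

theorem frobNorm_nonneg (A : Matrix (Fin d) (Fin d) ℂ) : 0 ≤ frobNorm A := Real.sqrt_nonneg _

theorem frobNorm_eq_zero_iff : frobNorm A = 0 ↔ A = 0 := by
  rw [frobNorm, Real.sqrt_eq_zero (by positivity),
    Fintype.sum_eq_zero_iff_of_nonneg fun i => by positivity, ← Matrix.ext_iff, funext_iff]
  refine forall_congr' fun i => ?_
  rw [Pi.zero_apply, Fintype.sum_eq_zero_iff_of_nonneg fun j => by positivity, funext_iff]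
  simp

theorem norm_trace_mul_le_frobNorm_mul (A B : Matrix (Fin d) (Fin d) ℂ) :
    ‖(A * B).trace‖ ≤ frobNorm A * frobNorm B := by
  have hB : frobNorm B = √(∑ i, ∑ j, ‖B j i‖ ^ 2) := by rw [frobNorm, Finset.sum_comm]
  calc ‖(A * B).trace‖ = ‖∑ p : Fin d × Fin d, A p.1 p.2 * B p.2 p.1‖ := by
        simp [Matrix.trace, Matrix.mul_apply, Fintype.sum_prod_type]
    _ ≤ ∑ p : Fin d × Fin d, ‖A p.1 p.2‖ * ‖B p.2 p.1‖ := by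
        simpa only [norm_mul] using
          norm_sum_le Finset.univ fun p : Fin d × Fin d => A p.1 p.2 * B p.2 p.1
    _ ≤ √(∑ p : Fin d × Fin d, ‖A p.1 p.2‖ ^ 2) * √(∑ p : Fin d × Fin d, ‖B p.2 p.1‖ ^ 2) :=
        Real.sum_mul_le_sqrt_mul_sqrt _ _ _
    _ = frobNorm A * frobNorm B := by
        rw [hB, frobNorm, Fintype.sum_prod_type, Fintype.sum_prod_type]

theorem Matrix.IsHermitian.frobNorm_sq (hA : A.IsHermitian) :
    frobNorm A ^ 2 = ∑ i, hA.eigenvalues i ^ 2 := by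
  have htrace : (A ^ 2).trace = ∑ i, ∑ j, ((‖A i j‖ ^ 2 : ℝ) : ℂ) := by
    simp only [sq A, Matrix.trace, Matrix.diag, Matrix.mul_apply]
    refine Finset.sum_congr rfl fun i _ => Finset.sum_congr rfl fun j _ => ?_
    rw [← hA.apply j i, Complex.ofReal_pow]
    exact Complex.mul_conj' _
  have h := hA.trace_cfc (· ^ 2)
  rw [cfc_pow_id A 2 hA.isSelfAdjoint, htrace] at h
  rw [frobNorm, Real.sq_sqrt (by positivity)]
  simpa only [RCLike.ofReal_eq_complex_ofReal, Complex.re_sum, Complex.ofReal_re] using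
    congrArg Complex.re h

theorem traceNorm_eq_re_trace_abs (A : Matrix (Fin d) (Fin d) ℂ) :
    traceNorm A = (CFC.abs A).trace.re := by
  rw [traceNorm, PosSemidef.sqrt_eq_cfcSqrt, CFC.abs, star_eq_conjTranspose]

theorem traceNorm_nonneg (A : Matrix (Fin d) (Fin d) ℂ) : 0 ≤ traceNorm A := by
  rw [traceNorm_eq_re_trace_abs]
  exact Complex.nonneg_iff.mp (PosSemidef.trace_nonneg (CFC.abs_nonneg A).posSemidef) |>.1

theorem Matrix.PosSemidef.traceNorm_eq (hA : A.PosSemidef) : traceNorm A = A.trace.re := by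
  rw [traceNorm_eq_re_trace_abs, CFC.abs_of_nonneg A hA.nonneg]

theorem Matrix.IsHermitian.traceNorm_eq_sum_abs_eigenvalues (hA : A.IsHermitian) :
    traceNorm A = ∑ i, |hA.eigenvalues i| := by
  rw [traceNorm_eq_re_trace_abs, CFC.abs_eq_cfc_norm A hA.isSelfAdjoint, hA.trace_cfc]
  simp [Complex.re_sum]

theorem Matrix.IsHermitian.frobNorm_le_traceNorm (hA : A.IsHermitian) :
    frobNorm A ≤ traceNorm A := by
  rw [← pow_le_pow_iff_left₀ (frobNorm_nonneg A) (traceNorm_nonneg A) two_ne_zero,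
    hA.frobNorm_sq, hA.traceNorm_eq_sum_abs_eigenvalues]
  simpa only [sq_abs] using
    Finset.sum_sq_le_sq_sum_of_nonneg fun i _ => abs_nonneg (hA.eigenvalues i)

theorem Matrix.IsHermitian.traceNorm_pos (hA : A.IsHermitian) (h : A ≠ 0) : 0 < traceNorm A :=
  (frobNorm_nonneg A).lt_of_ne' (mt frobNorm_eq_zero_iff.mp h)
    |>.trans_le hA.frobNorm_le_traceNorm

theorem Matrix.IsHermitian.re_trace_cfcSign_mul_self (hA : A.IsHermitian) :
    (A.cfcSign * A).trace.re = traceNorm A := by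
  rw [hA.cfcSign_mul_self, traceNorm_eq_re_trace_abs]

theorem Matrix.IsHermitian.norm_trace_mul_le (hA : A.IsHermitian)
    (W : Matrix (Fin d) (Fin d) ℂ) :
    ‖(W * A).trace‖ ≤ opNorm W * traceNorm A := by
  set U := hA.eigenvectorUnitary
  have h_diag : (W * A).trace =
      ∑ i, (star (U : Matrix (Fin d) (Fin d) ℂ) * W * U) i i * hA.eigenvalues i := by
    conv_lhs => rw [hA.spectral_theorem, Unitary.conjStarAlgAut_apply, ← Matrix.mul_assoc,
      trace_mul_comm, ← Matrix.mul_assoc, ← Matrix.mul_assoc]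
    simp only [trace, diag_apply, mul_diagonal, Function.comp_apply, Complex.coe_algebraMap, U]
  have h_unitary : ‖star (U : Matrix (Fin d) (Fin d) ℂ) * W * U‖ = opNorm W := by
    rw [← Unitary.coe_star, CStarRing.norm_mul_coe_unitary, CStarRing.norm_coe_unitary_mul,
      opNorm_eq_l2_opNorm]
  rw [h_diag, hA.traceNorm_eq_sum_abs_eigenvalues, Finset.mul_sum]
  refine (norm_sum_le _ _).trans (Finset.sum_le_sum fun i _ => ?_)
  rw [norm_mul, Complex.norm_real, Real.norm_eq_abs, ← h_unitary]
  exact mul_le_mul_of_nonneg_right (norm_entry_le_l2_opNorm _ i i) (abs_nonneg _)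

end FrobeniusAndTraceNorm

theorem Matrix.trace_mul_sandwich {n R : Type*} [Fintype n] [CommSemiring R]
    (F X Z : Matrix n n R) : (X * (F * Z * F)).trace = (F * X * F * Z).trace := by
  rw [← Matrix.mul_assoc, trace_mul_comm]
  simp only [Matrix.mul_assoc]

section TangentSpace

variable {d : ℕ} {E : Matrix (Fin d) (Fin d) ℂ}

theorem PT_add_PTperp (E A : Matrix (Fin d) (Fin d) ℂ) : PT E A + PTperp E A = A :=
  sub_add_cancel _ _

theorem Matrix.IsHermitian.PTperp {A : Matrix (Fin d) (Fin d) ℂ} (hA : A.IsHermitian)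
    (hE : E.IsHermitian) : (PTperp E A).IsHermitian := by
  have h := isHermitian_mul_mul_conjTranspose (1 - E) hA
  rwa [(isHermitian_one.sub hE).eq] at h

theorem PTperp_PTperp (hE : IsStarProjection E) (A : Matrix (Fin d) (Fin d) ℂ) :
    PTperp E (PTperp E A) = PTperp E A := by
  have hF : (1 - E) * (1 - E) = 1 - E := hE.one_sub.isIdempotentElem.eq
  calc (1 - E) * ((1 - E) * A * (1 - E)) * (1 - E)
      = (1 - E) * (1 - E) * A * ((1 - E) * (1 - E)) := by simp only [Matrix.mul_assoc]
    _ = PTperp E A := by rw [hF, PTperp]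

theorem trace_PT_mul_PTperp (hE : IsStarProjection E) (A B : Matrix (Fin d) (Fin d) ℂ) :
    (PT E A * PTperp E B).trace = 0 := by
  rw [PT, Matrix.sub_mul, trace_sub, PTperp, trace_mul_sandwich, trace_mul_sandwich, ← PTperp,
    ← PTperp, PTperp_PTperp hE, sub_self]

theorem trace_mul_eq_trace_PT_add_trace_PTperp (hE : IsStarProjection E)
    (A B : Matrix (Fin d) (Fin d) ℂ) :
    (A * B).trace = (PT E A * PT E B).trace + (PTperp E A * PTperp E B).trace := by
  conv_lhs => rw [← PT_add_PTperp E A, ← PT_add_PTperp E B]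
  rw [Matrix.add_mul, Matrix.mul_add, Matrix.mul_add, trace_add, trace_add, trace_add,
    trace_PT_mul_PTperp hE, trace_mul_comm (PTperp E A), trace_PT_mul_PTperp hE, add_zero,
    zero_add]

theorem PTperp_self (hE : IsStarProjection E) : PTperp E E = 0 := by
  rw [PTperp, hE.one_sub_mul_self, Matrix.zero_mul]

theorem PT_self (hE : IsStarProjection E) : PT E E = E := by
  rw [PT, ← PTperp, PTperp_self hE, sub_zero]

theorem mul_PTperp (hE : IsStarProjection E) (A : Matrix (Fin d) (Fin d) ℂ) :
    E * PTperp E A = 0 := by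
  rw [PTperp, ← Matrix.mul_assoc, ← Matrix.mul_assoc, hE.mul_one_sub_self, Matrix.zero_mul,
    Matrix.zero_mul]

theorem PTperp_mul (hE : IsStarProjection E) (A : Matrix (Fin d) (Fin d) ℂ) :
    PTperp E A * E = 0 := by
  rw [PTperp, Matrix.mul_assoc, hE.one_sub_mul_self, Matrix.mul_zero]

theorem PTperp_eq_self {S : Matrix (Fin d) (Fin d) ℂ} (hES : E * S = 0) (hSE : S * E = 0) :
    PTperp E S = S := by
  simp [PTperp, Matrix.sub_mul, Matrix.mul_sub, hES, hSE]

theorem PT_eq_zero {S : Matrix (Fin d) (Fin d) ℂ} (hES : E * S = 0) (hSE : S * E = 0) :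
    PT E S = 0 := by
  rw [PT, ← PTperp, PTperp_eq_self hES hSE, sub_self]

theorem PTperp_ne_zero {Δ : Matrix (Fin d) (Fin d) ℂ} {c : ℝ} (hΔ : Δ ≠ 0)
    (hcase : frobNorm (PT E Δ) ≤ c * frobNorm (PTperp E Δ)) : PTperp E Δ ≠ 0 := by
  intro h
  have hT : PT E Δ = 0 := frobNorm_eq_zero_iff.mp <| le_antisymm
    (by simpa [h, frobNorm_eq_zero_iff.mpr] using hcase) (frobNorm_nonneg _)
  exact hΔ (by rw [← PT_add_PTperp E Δ, hT, h, add_zero])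

theorem traceNorm_add_lower_bound {ρ Δ : Matrix (Fin d) (Fin d) ℂ} (hρ : ρ.PosSemidef)
    (hE : IsStarProjection E) (hEρ : E * ρ = ρ) (hΔ : Δ.IsHermitian) :
    traceNorm ρ + (E * PT E Δ).trace.re + traceNorm (PTperp E Δ) ≤ traceNorm (ρ + Δ) := by
  set Δp := PTperp E Δ
  have hΔp : Δp.IsHermitian := hΔ.PTperp hE.isSelfAdjoint
  set S := Δp.cfcSign
  have hES : E * S = 0 := hΔp.mul_cfcSign_eq_zero (mul_PTperp hE Δ)
  have hSE : S * E = 0 := hΔp.cfcSign_mul_eq_zero (PTperp_mul hE Δ)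
  have hSρ : S * ρ = 0 := by rw [← hEρ, ← Matrix.mul_assoc, hSE, Matrix.zero_mul]
  have hEΔ : (E * Δ).trace = (E * PT E Δ).trace := by
    rw [trace_mul_eq_trace_PT_add_trace_PTperp hE, PT_self hE, PTperp_self hE, Matrix.zero_mul,
      trace_zero, add_zero]
  have hSΔ : (S * Δ).trace.re = traceNorm Δp := by
    rw [trace_mul_eq_trace_PT_add_trace_PTperp hE, PT_eq_zero hES hSE, PTperp_eq_self hES hSE,
      Matrix.zero_mul, trace_zero, zero_add]
    exact hΔp.re_trace_cfcSign_mul_self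
  have hW : opNorm (E + S) ≤ 1 := l2_opNorm_add_le_one hE hES hSE hΔp.l2_opNorm_cfcSign_le
  calc traceNorm ρ + (E * PT E Δ).trace.re + traceNorm Δp = ((E + S) * (ρ + Δ)).trace.re := by
        rw [hρ.traceNorm_eq, ← hEΔ, ← hSΔ, Matrix.add_mul, Matrix.mul_add, Matrix.mul_add, hEρ,
          hSρ, trace_add, trace_add, trace_add, trace_zero, zero_add]
        simp only [Complex.add_re]
    _ ≤ opNorm (E + S) * traceNorm (ρ + Δ) :=
        (Complex.re_le_norm _).trans ((hρ.1.add hΔ).norm_trace_mul_le _)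
    _ ≤ traceNorm (ρ + Δ) := mul_le_of_le_one_left (traceNorm_nonneg _) hW

theorem neg_traceNorm_PTperp_lt_re_trace_mul_PT {Δ Y : Matrix (Fin d) (Fin d) ℂ} {c : ℝ}
    (hc : 0 ≤ c) (hE : IsStarProjection E) (hΔ : Δ.IsHermitian) (hΔp : PTperp E Δ ≠ 0)
    (hcase : frobNorm (PT E Δ) ≤ c * frobNorm (PTperp E Δ)) (hYΔ : (Y * Δ).trace = 0)
    (hY1 : frobNorm (PT E Y - E) ≤ 1 / (2 * c)) (hY2 : opNorm (PTperp E Y) < 1 / 2) :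
    -traceNorm (PTperp E Δ) < (E * PT E Δ).trace.re := by
  set Δp := PTperp E Δ
  have hΔpH : Δp.IsHermitian := hΔ.PTperp hE.isSelfAdjoint
  have hpos := hΔpH.traceNorm_pos hΔp
  have hpair : (E * PT E Δ).trace = -((PT E Y - E) * PT E Δ).trace - (PTperp E Y * Δp).trace := by
    rw [trace_mul_eq_trace_PT_add_trace_PTperp hE] at hYΔ
    rw [Matrix.sub_mul, trace_sub]
    linear_combination hYΔ
  have hT : ((PT E Y - E) * PT E Δ).trace.re ≤ traceNorm Δp / 2 :=
    calc _ ≤ frobNorm (PT E Y - E) * frobNorm (PT E Δ) :=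
          (Complex.re_le_norm _).trans (norm_trace_mul_le_frobNorm_mul _ _)
      _ ≤ 1 / (2 * c) * (c * frobNorm Δp) :=
          mul_le_mul hY1 hcase (frobNorm_nonneg _) (by positivity)
      _ = frobNorm Δp / 2 * (c / c) := by ring
      _ ≤ frobNorm Δp / 2 :=
          mul_le_of_le_one_right (by linarith [frobNorm_nonneg Δp]) (div_self_le_one c)
      _ ≤ traceNorm Δp / 2 := by linarith [hΔpH.frobNorm_le_traceNorm]
  have hperp : (PTperp E Y * Δp).trace.re < traceNorm Δp / 2 :=
    calc _ ≤ opNorm (PTperp E Y) * traceNorm Δp :=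
          (Complex.re_le_norm _).trans (hΔpH.norm_trace_mul_le _)
      _ < 1 / 2 * traceNorm Δp := mul_lt_mul_of_pos_right hY2 hpos
      _ = traceNorm Δp / 2 := one_div_mul_eq_div _ _
  rw [hpair, Complex.sub_re, Complex.neg_re]
  linarith

end TangentSpace

theorem traceNorm_strict_increase_general {d : ℕ} (ρ E Δ Y : Matrix (Fin d) (Fin d) ℂ)
    (hρ : ρ.PosSemidef)
    (hE : E.IsHermitian) (hE2 : E * E = E)
    (hEρ : E * ρ = ρ)
    (hΔ : Δ.IsHermitian) (hΔne : Δ ≠ 0)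
    (hcase : frobNorm (PT E Δ) ≤ (d : ℝ) ^ 2 * frobNorm (PTperp E Δ))
    (hYΔ : (Y * Δ).trace = 0)
    (hY1 : frobNorm (PT E Y - E) ≤ 1 / (2 * (d : ℝ) ^ 2))
    (hY2 : opNorm (PTperp E Y) < 1 / 2) :
    traceNorm ρ < traceNorm (ρ + Δ) := by
  have hEproj : IsStarProjection E := ⟨hE2, hE⟩
  have hΔp : PTperp E Δ ≠ 0 := PTperp_ne_zero hΔne hcase
  linarith [traceNorm_add_lower_bound hρ hEproj hEρ hΔ,
    neg_traceNorm_PTperp_lt_re_trace_mul_PT (by positivity) hEproj hΔ hΔp hcase hYΔ hY1 hY2]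

theorem traceNorm_strict_increase {d : ℕ} (ρ E Δ Y : Matrix (Fin d) (Fin d) ℂ)
    (hρ : ρ.PosSemidef)
    (hE : E.IsHermitian) (hE2 : E * E = E)
    (hEρ : E * ρ = ρ) (hρE : ρ * E = ρ) (hrank : E.rank = ρ.rank)
    (hΔ : Δ.IsHermitian) (hΔne : Δ ≠ 0)
    (hcase : frobNorm (PT E Δ) ≤ (d : ℝ) ^ 2 * frobNorm (PTperp E Δ))
    (hY : Y.IsHermitian)
    (hYΔ : (Y * Δ).trace = 0)
    (hY1 : frobNorm (PT E Y - E) ≤ 1 / (2 * (d : ℝ) ^ 2))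
    (hY2 : opNorm (PTperp E Y) < 1 / 2) :
    traceNorm ρ < traceNorm (ρ + Δ) :=
  traceNorm_strict_increase_general ρ E Δ Y hρ hE hE2 hEρ hΔ hΔne hcase hYΔ hY1 hY2
end

section
/- Let ρ_t be a density matrix (positive semidefinite, trace one) on ℂ^d whose largest eigenvalue is at least 1/2, and let |ψ⟩ be a corresponding unit eigenvector. Then ‖ρ_t − |ψ⟩⟨ψ|‖₂ ≤ √2 · (1 − Tr(ρ_t²)). -/
open Matrix
open scoped ComplexOrder

/-!
Write `P = |ψ⟩⟨ψ|` and `σ = ρ - λP`. Since `ρP = Pρ = λP`, we have `σ = (1 - P)ρ(1 - P)`, so `σ`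
is positive semidefinite, orthogonal to `P`, and `Tr σ = 1 - λ`. Hence
`Tr ρ² = λ² + Tr σ²` and `‖ρ - P‖₂² = (1 - λ)² + Tr σ²`, while `Tr σ² ≤ (Tr σ)² = (1 - λ)²`.
What remains is the scalar inequality `(1 - λ)² + q ≤ 2 (1 - λ² - q)²` for `q ≤ (1 - λ)²`;
at the extreme `q = (1 - λ)²` it reduces to `λ ≥ 1/2`.
-/

lemma smul_add_mul_self_of_mul_eq_zero {R A : Type*} [Monoid R] [NonUnitalNonAssocSemiring A]
    [DistribMulAction R A] [IsScalarTower R A A] [SMulCommClass R A A]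
    {p s : A} (hp : p * p = p) (hps : p * s = 0) (hsp : s * p = 0) (a : R) :
    (a • p + s) * (a • p + s) = a ^ 2 • p + s * s := by
  simp only [add_mul, mul_add, smul_mul_assoc, mul_smul_comm, hp, hps, hsp, smul_zero, add_zero,
    zero_add, smul_smul, sq]

lemma Real.sqrt_sub_one_sq_add_le {lam q : ℝ} (hlam : 1 / 2 ≤ lam) (hlam₁ : lam ≤ 1)
    (hq : q ≤ (1 - lam) ^ 2) :
    √((lam - 1) ^ 2 + q) ≤ √2 * (1 - (lam ^ 2 + q)) := by
  have hsq : (lam - 1) ^ 2 + q ≤ 2 * (1 - (lam ^ 2 + q)) ^ 2 := by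
    nlinarith [mul_nonneg (sub_nonneg.2 hlam₁) (sub_nonneg.2 hlam),
      mul_nonneg (sub_nonneg.2 hq) (sub_nonneg.2 hlam)]
  have hnonneg : 0 ≤ 1 - (lam ^ 2 + q) := by nlinarith
  calc √((lam - 1) ^ 2 + q) ≤ √(2 * (1 - (lam ^ 2 + q)) ^ 2) := Real.sqrt_le_sqrt hsq
    _ = √2 * (1 - (lam ^ 2 + q)) := by rw [Real.sqrt_mul zero_le_two, Real.sqrt_sq hnonneg]

namespace Matrix

variable {n 𝕜 : Type*} [Fintype n] [RCLike 𝕜]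

lemma star_dotProduct_self_eq_sum_norm_sq (v : n → 𝕜) :
    star v ⬝ᵥ v = ((∑ i, ‖v i‖ ^ 2 : ℝ) : 𝕜) := by
  simp [dotProduct, RCLike.conj_mul]

lemma vecMulVec_star_mul_self {v : n → 𝕜} (hv : star v ⬝ᵥ v = 1) :
    vecMulVec v (star v) * vecMulVec v (star v) = vecMulVec v (star v) := by
  rw [vecMulVec_mul_vecMulVec, hv, one_smul]

lemma trace_vecMulVec_star {v : n → 𝕜} (hv : star v ⬝ᵥ v = 1) :
    (vecMulVec v (star v)).trace = 1 := by
  rw [trace_vecMulVec, dotProduct_comm, hv]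

section Compression

variable {ρ P : Matrix n n 𝕜} {c : ℝ}

lemma IsHermitian.mul_eq_smul_of_mul_eq_smul (hρ : ρ.IsHermitian) (hP : P.IsHermitian)
    (h : ρ * P = (c : 𝕜) • P) : P * ρ = (c : 𝕜) • P := by
  simpa [conjTranspose_mul, hρ.eq, hP.eq] using congrArg (·ᴴ) h

lemma sub_smul_mul_eq_zero (hPP : P * P = P) (h : ρ * P = (c : 𝕜) • P) :
    (ρ - (c : 𝕜) • P) * P = 0 := by
  rw [sub_mul, h, smul_mul_assoc, hPP, sub_self]

lemma mul_sub_smul_eq_zero (hPP : P * P = P) (h : P * ρ = (c : 𝕜) • P) :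
    P * (ρ - (c : 𝕜) • P) = 0 := by
  rw [mul_sub, h, mul_smul_comm, hPP, sub_self]

lemma PosSemidef.sub_smul_of_mul_eq_smul [DecidableEq n] (hρ : ρ.PosSemidef)
    (hP : P.IsHermitian) (hPP : P * P = P) (h : ρ * P = (c : 𝕜) • P) :
    (ρ - (c : 𝕜) • P).PosSemidef := by
  have hPρ := hρ.isHermitian.mul_eq_smul_of_mul_eq_smul hP h
  have hcompress : ρ - (c : 𝕜) • P = (1 - P)ᴴ * ρ * (1 - P) := by
    rw [conjTranspose_sub, conjTranspose_one, hP.eq, sub_mul, one_mul, hPρ, sub_mul, mul_sub,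
      mul_one, h, mul_sub, mul_one, smul_mul_assoc, hPP, sub_self, sub_zero]
  exact hcompress ▸ hρ.conjTranspose_mul_mul_same _

lemma re_trace_smul_add_mul_self {σ : Matrix n n 𝕜} (hPP : P * P = P) (hPσ : P * σ = 0)
    (hσP : σ * P = 0) (htr : P.trace = 1) (a : ℝ) :
    RCLike.re (((a : 𝕜) • P + σ) * ((a : 𝕜) • P + σ)).trace =
      a ^ 2 + RCLike.re (σ * σ).trace := by
  rw [smul_add_mul_self_of_mul_eq_zero hPP hPσ hσP, trace_add, trace_smul, htr, smul_eq_mul,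
    mul_one, map_add, ← RCLike.ofReal_pow, RCLike.ofReal_re]

end Compression

lemma IsHermitian.trace_mul_self_eq_sum_eigenvalues_sq [DecidableEq n] {A : Matrix n n 𝕜}
    (hA : A.IsHermitian) : (A * A).trace = ∑ i, (hA.eigenvalues i : 𝕜) ^ 2 := by
  conv_lhs => rw [hA.spectral_theorem, ← map_mul, Unitary.conjStarAlgAut_apply, trace_mul_cycle,
    Unitary.coe_star_mul_self, one_mul, diagonal_mul_diagonal, trace_diagonal]
  simp [sq]

lemma PosSemidef.re_trace_mul_self_le_sq {A : Matrix n n 𝕜} (hA : A.PosSemidef) :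
    RCLike.re (A * A).trace ≤ RCLike.re A.trace ^ 2 := by
  classical
  rw [hA.isHermitian.trace_mul_self_eq_sum_eigenvalues_sq, hA.isHermitian.trace_eq_sum_eigenvalues]
  simp only [map_sum, ← RCLike.ofReal_pow, RCLike.ofReal_re]
  exact Finset.sum_sq_le_sq_sum_of_nonneg fun i _ => hA.eigenvalues_nonneg i

end Matrix

lemma frobNorm_eq_sqrt_re_trace_conjTranspose_mul_self {d : ℕ} (A : Matrix (Fin d) (Fin d) ℂ) :
    frobNorm A = √(Aᴴ * A).trace.re := by
  rw [frobNorm, Finset.sum_comm]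
  congr 1
  simp [trace, mul_apply, Complex.re_sum, ← Complex.normSq_eq_norm_sq, Complex.normSq_apply]

theorem frobNorm_sub_top_eigvec_le_general {d : ℕ} (ρ : Matrix (Fin d) (Fin d) ℂ)
    (hρ : ρ.PosSemidef) (htr : ρ.trace = 1)
    (lam : ℝ) (ψ : Fin d → ℂ)
    (hψnorm : ∑ i, ‖ψ i‖ ^ 2 = 1)
    (heig : ρ *ᵥ ψ = (lam : ℂ) • ψ)
    (hlam : 1 / 2 ≤ lam) :
    frobNorm (ρ - Matrix.vecMulVec ψ (star ψ)) ≤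
      Real.sqrt 2 * (1 - ((ρ * ρ).trace).re) := by
  have hψ : star ψ ⬝ᵥ ψ = 1 := by
    rw [star_dotProduct_self_eq_sum_norm_sq, hψnorm, RCLike.ofReal_one]
  set P := vecMulVec ψ (star ψ)
  have hP : P.IsHermitian := (posSemidef_vecMulVec_self_star ψ).isHermitian
  have hPP : P * P = P := vecMulVec_star_mul_self hψ
  have hPtr : P.trace = 1 := trace_vecMulVec_star hψ
  have hρP : ρ * P = (lam : ℂ) • P := by rw [mul_vecMulVec, heig, smul_vecMulVec]
  set σ := ρ - (lam : ℂ) • P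
  have hσ : σ.PosSemidef := hρ.sub_smul_of_mul_eq_smul hP hPP hρP
  have hσP : σ * P = 0 := sub_smul_mul_eq_zero hPP hρP
  have hPσ : P * σ = 0 :=
    mul_sub_smul_eq_zero hPP (hρ.isHermitian.mul_eq_smul_of_mul_eq_smul hP hρP)
  have htrσ : σ.trace.re = 1 - lam := by
    simp [σ, trace_sub, trace_smul, htr, hPtr]
  have hρ_eq : ρ = (lam : ℂ) • P + σ := (add_sub_cancel _ _).symm
  have hρP_eq : ρ - P = ((lam - 1 : ℝ) : ℂ) • P + σ := by
    rw [hρ_eq]; push_cast; rw [sub_smul, one_smul]; abel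
  have hρ_sq : (ρ * ρ).trace.re = lam ^ 2 + (σ * σ).trace.re := by
    rw [hρ_eq]; exact re_trace_smul_add_mul_self hPP hPσ hσP hPtr lam
  have hfrob : frobNorm (ρ - P) = √((lam - 1) ^ 2 + (σ * σ).trace.re) := by
    rw [frobNorm_eq_sqrt_re_trace_conjTranspose_mul_self, (hρ.isHermitian.sub hP).eq, hρP_eq]
    exact congrArg _ (re_trace_smul_add_mul_self hPP hPσ hσP hPtr (lam - 1))
  rw [hfrob, hρ_sq]
  refine Real.sqrt_sub_one_sq_add_le hlam ?_ (htrσ ▸ hσ.re_trace_mul_self_le_sq)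
  linarith [htrσ ▸ Complex.nonneg_iff.1 hσ.trace_nonneg |>.1]

theorem frobNorm_sub_top_eigvec_le {d : ℕ} (ρ : Matrix (Fin d) (Fin d) ℂ)
    (hρ : ρ.PosSemidef) (htr : ρ.trace = 1)
    (lam : ℝ) (ψ : Fin d → ℂ)
    (hψnorm : ∑ i, ‖ψ i‖ ^ 2 = 1)
    (heig : ρ *ᵥ ψ = (lam : ℂ) • ψ)
    (hmax : ∀ (μ : ℝ) (v : Fin d → ℂ), v ≠ 0 → ρ *ᵥ v = (μ : ℂ) • v → μ ≤ lam)
    (hlam : 1 / 2 ≤ lam) :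
    frobNorm (ρ - Matrix.vecMulVec ψ (star ψ)) ≤
      Real.sqrt 2 * (1 - ((ρ * ρ).trace).re) :=
  frobNorm_sub_top_eigvec_le_general ρ hρ htr lam ψ hψnorm heig hlam
end
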